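/- Under the asymptotic framework, if a sequence of fixed thresholds ω_m > 0 satisfies v_m·2(1 − D(ω_m)) + 2D(ω_m·(1+u_m)^(−1/2)) − 1 → C_1 + C_2, then necessarily each risk component converges to its asymptotically optimal value individually: v_m·2(1 − D(ω_m)) → C_1 and 2D(ω_m·(1+u_m)^(−1/2)) − 1 → C_2, where C_1 = 2√C·d(√C)/γ and C_2 = 2D(√C) − 1. -/

import Mathlib

/-!
Write `s = ω (1 + u) ^ (-1/2)` and `A = d √C · √C ^ (γ + 1) = C ^ ((γ + 1) / 2) d √C`.
The tail asymptotics `1 - D x ~ Cd x ^ (-γ) / γ` show that the first component is eventually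
at least `(1 - ε) · 2 A s ^ (-γ) / γ`, or else arbitrarily large (when `ω` stays bounded,
because `v → ∞`). So the total risk is asymptotically bounded below by `H s`, where
`H t = 2 A t ^ (-γ) / γ + 2 D t - 1`. The monotone likelihood ratio makes `x ↦ d x · x ^ (γ + 1)`
strictly increasing, so in `H t - H t' = 2 ∫ x in t'..t, (d x - A x ^ (-γ - 1))` the integrand
has the sign of `x - √C`: `H` attains its strict minimum `C₁ + C₂` at `√C`. Hence `s → √C`,
the second component converges by continuity of `D`, and the first one as the difference.
-/
open MeasureTheory Filter

/-- Cumulative distribution function of a density `d` with respect to Lebesgue measure. -/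
noncomputable def cdf (d : ℝ → ℝ) (x : ℝ) : ℝ := ∫ t in Set.Iic x, d t

/-- A monotone polynomial tail (MPT) density with tail index `γ` and tail constant `Cd`:
a probability density function that is even (or supported on the nonnegative half-line),
strictly positive on `(0, ∞)`, satisfies `d x * x ^ (γ + 1) → Cd` as `x → ∞`, and has a
monotone likelihood ratio: for every `θ > 1`, `x ↦ d (x / θ) / d x` is strictly increasing
on `(0, ∞)`. -/
structure IsMPT (d : ℝ → ℝ) (γ Cd : ℝ) : Prop where
  gamma_pos : 0 < γ
  Cd_pos : 0 < Cd
  nonneg : ∀ x, 0 ≤ d x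
  integrable : Integrable d
  integral_one : ∫ x, d x = 1
  even_or_halfline : (∀ x, d (-x) = d x) ∨ (∀ x < 0, d x = 0)
  pos : ∀ x, 0 < x → 0 < d x
  tail : Tendsto (fun x => d x * x ^ (γ + 1)) atTop (nhds Cd)
  mlr : ∀ θ : ℝ, 1 < θ → StrictMonoOn (fun x => d (x / θ) / d x) (Set.Ioi 0)

open Set Topology Real

variable {d : ℝ → ℝ} {γ Cd : ℝ}

lemma cdf_sub_cdf (hd : Integrable d) (a b : ℝ) : cdf d b - cdf d a = ∫ t in a..b, d t :=
  intervalIntegral.integral_Iic_sub_Iic hd.integrableOn hd.integrableOn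

lemma continuous_cdf (hd : Integrable d) : Continuous (cdf d) := by
  have : cdf d = fun x => cdf d 0 + ∫ t in (0 : ℝ)..x, d t :=
    funext fun x => by rw [← cdf_sub_cdf hd]; ring
  rw [this]
  exact continuous_const.add (hd.continuous_primitive 0)

lemma monotone_cdf (hd : Integrable d) (h0 : ∀ x, 0 ≤ d x) : Monotone (cdf d) := fun _ _ hab =>
  setIntegral_mono_set hd.integrableOn (.of_forall h0) (Iic_subset_Iic.2 hab).eventuallyLE

lemma cdf_nonneg (h0 : ∀ x, 0 ≤ d x) (x : ℝ) : 0 ≤ cdf d x :=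
  setIntegral_nonneg measurableSet_Iic fun t _ => h0 t

lemma one_sub_cdf (hd : Integrable d) (h1 : ∫ x, d x = 1) (x : ℝ) :
    1 - cdf d x = ∫ t in Ioi x, d t := by
  rw [← h1, ← intervalIntegral.integral_Iic_add_Ioi hd.integrableOn hd.integrableOn, cdf]
  ring

lemma setIntegral_Ioi_rpow_mul_rpow (hγ : 0 < γ) {x : ℝ} (hx : 0 < x) :
    (∫ t in Ioi x, t ^ (-(γ + 1))) * x ^ γ = 1 / γ := by
  rw [integral_Ioi_rpow_of_lt (by linarith) hx, show -(γ + 1) + 1 = -γ by ring, rpow_neg hx.le]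
  have := (rpow_pos_of_pos hx γ).ne'
  field_simp

lemma eventually_lt_setIntegral_Ioi_mul_rpow {f : ℝ → ℝ} (hf : Integrable f) (hγ : 0 < γ)
    {c : ℝ} (hc : Tendsto (fun x => f x * x ^ (γ + 1)) atTop (𝓝 c)) {b : ℝ} (hb : b < c / γ) :
    ∀ᶠ x in atTop, b < (∫ t in Ioi x, f t) * x ^ γ := by
  obtain ⟨k, hbk, hkc⟩ := exists_between ((lt_div_iff₀ hγ).1 hb)
  obtain ⟨M, hM⟩ := eventually_atTop.1 (hc.eventually (eventually_gt_nhds hkc))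
  filter_upwards [eventually_ge_atTop M, eventually_gt_atTop 0] with x hxM hx
  have hle : ∫ t in Ioi x, k * t ^ (-(γ + 1)) ≤ ∫ t in Ioi x, f t := by
    refine setIntegral_mono_on ((integrableOn_Ioi_rpow_of_lt (by linarith) hx).const_mul k)
      hf.integrableOn measurableSet_Ioi fun t ht => ?_
    have ht0 : 0 < t := hx.trans ht
    calc k * t ^ (-(γ + 1)) ≤ f t * t ^ (γ + 1) * t ^ (-(γ + 1)) := by
          gcongr; exact (hM t (hxM.trans ht.le)).le
      _ = f t := by rw [mul_assoc, ← rpow_add ht0, add_neg_cancel, rpow_zero, mul_one]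
  calc b < k / γ := (lt_div_iff₀ hγ).2 hbk
    _ = (∫ t in Ioi x, k * t ^ (-(γ + 1))) * x ^ γ := by
      rw [integral_const_mul, mul_assoc, setIntegral_Ioi_rpow_mul_rpow hγ hx, mul_one_div]
    _ ≤ (∫ t in Ioi x, f t) * x ^ γ := by gcongr

lemma tendsto_setIntegral_Ioi_mul_rpow {f : ℝ → ℝ} (hf : Integrable f) (hγ : 0 < γ) {c : ℝ}
    (hc : Tendsto (fun x => f x * x ^ (γ + 1)) atTop (𝓝 c)) :
    Tendsto (fun x => (∫ t in Ioi x, f t) * x ^ γ) atTop (𝓝 (c / γ)) := by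
  refine tendsto_order.2 ⟨fun b hb => eventually_lt_setIntegral_Ioi_mul_rpow hf hγ hc hb,
    fun b hb => ?_⟩
  have hneg : Tendsto (fun x => (-f) x * x ^ (γ + 1)) atTop (𝓝 (-c)) := by
    simpa only [Pi.neg_apply, neg_mul] using hc.neg
  filter_upwards [eventually_lt_setIntegral_Ioi_mul_rpow hf.neg hγ hneg (b := -b)
    (by rw [neg_div]; linarith)] with x hx
  rw [Pi.neg_def, integral_neg] at hx
  linarith

lemma IsMPT.tendsto_one_sub_cdf_mul_rpow (h : IsMPT d γ Cd) :
    Tendsto (fun x => (1 - cdf d x) * x ^ γ) atTop (𝓝 (Cd / γ)) := by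
  simpa only [one_sub_cdf h.integrable h.integral_one] using
    tendsto_setIntegral_Ioi_mul_rpow h.integrable h.gamma_pos h.tail

lemma StrictMonoOn.lt_of_tendsto_atTop {f : ℝ → ℝ} {a L x : ℝ} (hf : StrictMonoOn f (Ioi a))
    (hL : Tendsto f atTop (𝓝 L)) (hx : a < x) : f x < L := by
  have hx1 : a < x + 1 := by linarith
  refine (hf hx hx1 (lt_add_one x)).trans_le (ge_of_tendsto hL ?_)
  filter_upwards [eventually_ge_atTop (x + 1)] with z hz
  exact hf.monotoneOn hx1 (hx1.trans_le hz) hz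

lemma IsMPT.tendsto_likelihood_ratio (h : IsMPT d γ Cd) {θ : ℝ} (hθ : 0 < θ) :
    Tendsto (fun z => d (z / θ) / d z) atTop (𝓝 (θ ^ (γ + 1))) := by
  have := ((h.tail.comp (tendsto_id.atTop_div_const hθ)).div h.tail h.Cd_pos.ne').mul_const
    (θ ^ (γ + 1))
  rw [div_self h.Cd_pos.ne', one_mul] at this
  refine this.congr' ?_
  filter_upwards [eventually_gt_atTop 0] with z hz
  have := h.pos z hz
  have := (rpow_pos_of_pos hz (γ + 1)).ne'
  have := (rpow_pos_of_pos hθ (γ + 1)).ne'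
  simp only [Pi.div_apply, Function.comp_apply, id, div_rpow hz.le hθ.le]
  field_simp

lemma IsMPT.strictMonoOn_mul_rpow (h : IsMPT d γ Cd) :
    StrictMonoOn (fun x => d x * x ^ (γ + 1)) (Ioi 0) := by
  intro x (hx : 0 < x) y (hy : 0 < y) hxy
  have hlt := (h.mlr _ ((one_lt_div hx).2 hxy)).lt_of_tendsto_atTop
    (h.tendsto_likelihood_ratio (div_pos hy hx)) hy
  rw [div_div_cancel₀ hy.ne', div_rpow hy.le hx.le,
    div_lt_div_iff₀ (h.pos y hy) (rpow_pos_of_pos hx _)] at hlt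
  linarith

noncomputable def asymptoticRisk (d : ℝ → ℝ) (γ A t : ℝ) : ℝ :=
  2 * A * t ^ (-γ) / γ + (2 * cdf d t - 1)

lemma asymptoticRisk_self {r : ℝ} (hr : 0 < r) :
    asymptoticRisk d γ (d r * r ^ (γ + 1)) r = 2 * r * d r / γ + (2 * cdf d r - 1) := by
  have hpow : r ^ (γ + 1) * r ^ (-γ) = r := by
    rw [← rpow_add hr, add_neg_cancel_comm, rpow_one]
  rw [asymptoticRisk]
  linear_combination 2 * d r / γ * hpow

lemma intervalIntegrable_sub_mul_rpow (hd : Integrable d) (A : ℝ) {s t : ℝ} (hs : 0 < s)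
    (ht : 0 < t) : IntervalIntegrable (fun x => d x - A * x ^ (-(γ + 1))) volume s t :=
  hd.intervalIntegrable.sub
    ((intervalIntegral.intervalIntegrable_rpow (Or.inr (notMem_uIcc_of_lt hs ht))).const_mul A)

lemma asymptoticRisk_sub_asymptoticRisk (hd : Integrable d) (hγ : 0 < γ) (A : ℝ) {s t : ℝ}
    (hs : 0 < s) (ht : 0 < t) :
    asymptoticRisk d γ A t - asymptoticRisk d γ A s =
      2 * ∫ x in s..t, (d x - A * x ^ (-(γ + 1))) := by
  have h0 := notMem_uIcc_of_lt hs ht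
  rw [intervalIntegral.integral_sub hd.intervalIntegrable
      ((intervalIntegral.intervalIntegrable_rpow (Or.inr h0)).const_mul A),
    intervalIntegral.integral_const_mul, integral_rpow (Or.inr ⟨by linarith, h0⟩),
    ← cdf_sub_cdf hd, show -(γ + 1) + 1 = -γ by ring, asymptoticRisk, asymptoticRisk]
  field_simp
  ring

lemma IsMPT.strictMonoOn_asymptoticRisk (h : IsMPT d γ Cd) {r : ℝ} (hr : 0 < r) :
    StrictMonoOn (asymptoticRisk d γ (d r * r ^ (γ + 1))) (Ici r) := by
  intro s (hs : r ≤ s) t (ht : r ≤ t) hst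
  have hs0 := hr.trans_le hs
  rw [← sub_pos, asymptoticRisk_sub_asymptoticRisk h.integrable h.gamma_pos _ hs0 (hr.trans_le ht)]
  refine mul_pos two_pos (intervalIntegral.intervalIntegral_pos_of_pos_on
    (intervalIntegrable_sub_mul_rpow h.integrable _ hs0 (hr.trans_le ht)) (fun x hx => ?_) hst)
  have hx0 : 0 < x := hs0.trans hx.1
  have hlt : d r * r ^ (γ + 1) < d x * x ^ (γ + 1) :=
    h.strictMonoOn_mul_rpow hr hx0 (hs.trans_lt hx.1)
  rwa [sub_pos, rpow_neg hx0.le, ← div_eq_mul_inv, div_lt_iff₀ (rpow_pos_of_pos hx0 _)]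

lemma IsMPT.strictAntiOn_asymptoticRisk (h : IsMPT d γ Cd) {r : ℝ} (hr : 0 < r) :
    StrictAntiOn (asymptoticRisk d γ (d r * r ^ (γ + 1))) (Ioc 0 r) := by
  intro s ⟨hs0, _⟩ t ⟨ht0, htr⟩ hst
  rw [← sub_pos, ← neg_sub, asymptoticRisk_sub_asymptoticRisk h.integrable h.gamma_pos _ hs0 ht0,
    ← mul_neg, ← intervalIntegral.integral_neg]
  refine mul_pos two_pos (intervalIntegral.intervalIntegral_pos_of_pos_on
    (intervalIntegrable_sub_mul_rpow h.integrable _ hs0 ht0).neg (fun x hx => ?_) hst)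
  have hx0 : 0 < x := hs0.trans hx.1
  have hlt : d x * x ^ (γ + 1) < d r * r ^ (γ + 1) :=
    h.strictMonoOn_mul_rpow hx0 hr (hx.2.trans_le htr)
  rwa [neg_sub, sub_pos, rpow_neg hx0.le, ← div_eq_mul_inv, lt_div_iff₀ (rpow_pos_of_pos hx0 _)]

lemma exists_add_le_of_strictAntiOn_of_strictMonoOn {f : ℝ → ℝ} {r ε : ℝ} (hr : 0 < r)
    (hε : 0 < ε) (hanti : StrictAntiOn f (Ioc 0 r)) (hmono : StrictMonoOn f (Ici r)) :
    ∃ δ > 0, ∀ t > 0, ε ≤ |t - r| → f r + δ ≤ f t := by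
  set e := min ε (r / 2)
  have he : 0 < e := lt_min hε (half_pos hr)
  have her : e < r := (min_le_right _ _).trans_lt (half_lt_self hr)
  have heε : e ≤ ε := min_le_left _ _
  have hlow : f r < f (r - e) := hanti ⟨by linarith, by linarith⟩ ⟨hr, le_rfl⟩ (by linarith)
  have hhigh : f r < f (r + e) := hmono (mem_Ici.2 le_rfl) (by simp [he.le]) (by linarith)
  refine ⟨min (f (r - e) - f r) (f (r + e) - f r), lt_min (by linarith) (by linarith),
    fun t ht hdist => ?_⟩
  rcases le_abs'.1 hdist with hleft | hright
  · have : f (r - e) ≤ f t :=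
      hanti.antitoneOn (⟨ht, by linarith⟩ : t ∈ Ioc 0 r) ⟨by linarith, by linarith⟩ (by linarith)
    linarith [min_le_left (f (r - e) - f r) (f (r + e) - f r)]
  · have : f (r + e) ≤ f t :=
      hmono.monotoneOn (by simp [he.le] : r + e ∈ Ici r) (by simp only [mem_Ici]; linarith)
        (by linarith)
    linarith [min_le_right (f (r - e) - f r) (f (r + e) - f r)]

lemma tendsto_mul_one_add_rpow_neg {u v : ℕ → ℝ} {p c : ℝ} (hu : Tendsto u atTop atTop)
    (hvu : Tendsto (fun m => v m * u m ^ (-p)) atTop (𝓝 c)) :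
    Tendsto (fun m => v m * (1 + u m) ^ (-p)) atTop (𝓝 c) := by
  have hratio : Tendsto (fun m => (1 + u m) / u m) atTop (𝓝 1) := by
    have := hu.inv_tendsto_atTop.add_const 1
    rw [zero_add] at this
    refine this.congr' ?_
    filter_upwards [hu.eventually_gt_atTop 0] with m hm
    rw [Pi.inv_apply]
    field_simp
  have := hvu.mul ((continuousAt_rpow_const 1 (-p) (Or.inl one_ne_zero)).tendsto.comp hratio)
  rw [one_rpow, mul_one] at this
  refine this.congr' ?_
  filter_upwards [hu.eventually_gt_atTop 0] with m hm
  have := (rpow_pos_of_pos hm (-p)).ne'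
  rw [Function.comp_apply, div_rpow (by linarith) hm.le]
  field_simp

lemma IsMPT.eventually_le_first_term (h : IsMPT d γ Cd) {v w ω : ℕ → ℝ} {A ε : ℝ} (hA : 0 < A)
    (hε : 0 < ε) (hw : Tendsto w atTop atTop)
    (hvw : Tendsto (fun m => v m * w m ^ (-(γ / 2))) atTop (𝓝 (A / Cd))) (K : ℝ) :
    ∀ᶠ m in atTop, K ≤ v m * (2 * (1 - cdf d (ω m))) ∨
      (0 < ω m * w m ^ (-(1 : ℝ) / 2) ∧ (1 - ε) * (2 * A * (ω m * w m ^ (-(1 : ℝ) / 2)) ^ (-γ) / γ)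
        ≤ v m * (2 * (1 - cdf d (ω m)))) := by
  have hγ := h.gamma_pos
  have hCd := h.Cd_pos
  set ℓ := Cd / γ / (1 + ε)
  have hℓ : 0 < ℓ := by positivity
  have hℓlt : ℓ < Cd / γ := div_lt_self (by positivity) (by linarith)
  have hgt : (1 - ε) * (2 * A / γ) < 2 * (A / Cd) * ℓ := by
    rw [show 2 * (A / Cd) * ℓ = 2 * A / γ / (1 + ε) by simp only [ℓ]; field_simp,
      lt_div_iff₀ (by linarith)]
    nlinarith [mul_pos hε hε, show 0 < 2 * A / γ by positivity]
  obtain ⟨X, hX⟩ := eventually_atTop.1 ((h.tendsto_one_sub_cdf_mul_rpow.eventually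
    (eventually_gt_nhds hℓlt)).and (eventually_gt_atTop 0))
  have hX0 : 0 < X := (hX X le_rfl).2
  have hη : 0 < 1 - cdf d X :=
    pos_of_mul_pos_left (hℓ.trans (hX X le_rfl).1) (rpow_pos_of_pos hX0 γ).le
  have hv : Tendsto v atTop atTop := by
    refine (hvw.pos_mul_atTop (by positivity)
      ((tendsto_rpow_atTop (half_pos hγ)).comp hw)).congr' ?_
    filter_upwards [hw.eventually_gt_atTop 0] with m hm
    rw [Function.comp_apply, mul_assoc, ← rpow_add hm, neg_add_cancel, rpow_zero, mul_one]
  filter_upwards [((hvw.const_mul 2).mul_const ℓ).eventually (eventually_gt_nhds hgt),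
    hv.eventually_ge_atTop (max 0 (K / (2 * (1 - cdf d X)))), hw.eventually_gt_atTop 0]
    with m hlow hvm hwm
  have hv0 : 0 ≤ v m := (le_max_left _ _).trans hvm
  by_cases hωX : ω m ≤ X
  · left
    calc K ≤ v m * (2 * (1 - cdf d X)) :=
          (div_le_iff₀ (by positivity)).1 ((le_max_right _ _).trans hvm)
      _ ≤ v m * (2 * (1 - cdf d (ω m))) := by
          gcongr; exact monotone_cdf h.integrable h.nonneg hωX
  · right
    push Not at hωX
    have hω0 : 0 < ω m := hX0.trans hωX
    set s := ω m * w m ^ (-(1 : ℝ) / 2)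
    have hq : ℓ ≤ (1 - cdf d (ω m)) * ω m ^ γ := (hX (ω m) hωX.le).1.le
    have hid : v m * (2 * (1 - cdf d (ω m))) =
        2 * (v m * w m ^ (-(γ / 2))) * ((1 - cdf d (ω m)) * ω m ^ γ) * s ^ (-γ) := by
      have := (rpow_pos_of_pos hω0 γ).ne'
      have := (rpow_pos_of_pos hwm (γ / 2)).ne'
      rw [mul_rpow hω0.le (rpow_nonneg hwm.le _), ← rpow_mul hwm.le, rpow_neg hω0.le,
        rpow_neg hwm.le, show -(1 : ℝ) / 2 * -γ = γ / 2 by ring]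
      field_simp
    refine ⟨mul_pos hω0 (rpow_pos_of_pos hwm _), ?_⟩
    have hs : 0 ≤ s ^ (-γ) := rpow_nonneg (mul_pos hω0 (rpow_pos_of_pos hwm _)).le _
    have hc : 0 ≤ v m * w m ^ (-(γ / 2)) := mul_nonneg hv0 (rpow_nonneg hwm.le _)
    rw [hid]
    calc (1 - ε) * (2 * A * s ^ (-γ) / γ) = (1 - ε) * (2 * A / γ) * s ^ (-γ) := by ring
      _ ≤ 2 * (v m * w m ^ (-(γ / 2))) * ℓ * s ^ (-γ) := by gcongr
      _ ≤ 2 * (v m * w m ^ (-(γ / 2))) * ((1 - cdf d (ω m)) * ω m ^ γ) * s ^ (-γ) := by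
          gcongr

lemma IsMPT.tendsto_rescaled_threshold (h : IsMPT d γ Cd) {r : ℝ} (hr : 0 < r)
    {v w ω : ℕ → ℝ} (hw : Tendsto w atTop atTop)
    (hvw : Tendsto (fun m => v m * w m ^ (-(γ / 2))) atTop (𝓝 (d r * r ^ (γ + 1) / Cd)))
    (hrisk : Tendsto (fun m => v m * (2 * (1 - cdf d (ω m)))
        + (2 * cdf d (ω m * w m ^ (-(1 : ℝ) / 2)) - 1)) atTop
      (𝓝 (asymptoticRisk d γ (d r * r ^ (γ + 1)) r))) :
    Tendsto (fun m => ω m * w m ^ (-(1 : ℝ) / 2)) atTop (𝓝 r) := by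
  set A := d r * r ^ (γ + 1)
  set R := asymptoticRisk d γ A r
  have hγ := h.gamma_pos
  have hA : 0 < A := mul_pos (h.pos r hr) (rpow_pos_of_pos hr _)
  refine Metric.tendsto_nhds.2 fun ε₀ hε₀ => ?_
  obtain ⟨δ, hδ, hgap⟩ := exists_add_le_of_strictAntiOn_of_strictMonoOn hr hε₀
    (h.strictAntiOn_asymptoticRisk hr) (h.strictMonoOn_asymptoticRisk hr)
  have hR : -1 < R := by
    have : 0 < 2 * A * r ^ (-γ) / γ := by positivity
    have := cdf_nonneg h.nonneg r
    simp only [R, asymptoticRisk]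
    linarith
  have hK : 0 < R + δ + 1 := by linarith
  set ε := δ / (2 * (R + δ + 1))
  have hε : 0 < ε := by positivity
  have hε1 : ε ≤ 1 := (div_le_one (by positivity)).2 (by linarith)
  have hεK : ε * (R + δ + 1) = δ / 2 := by simp only [ε]; field_simp
  filter_upwards [hrisk.eventually (eventually_lt_nhds (show R < R + δ / 2 by linarith)),
    h.eventually_le_first_term hA hε hw hvw (R + δ + 1)] with m hsum hfirst
  set s := ω m * w m ^ (-(1 : ℝ) / 2)
  rw [Real.dist_eq]
  by_contra! hfar
  have hT2 : 0 ≤ (2 * cdf d s - 1) + 1 := by linarith [cdf_nonneg h.nonneg s]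
  rcases hfirst with hbig | ⟨hs0, hT1⟩
  · linarith
  · have hRs : R + δ ≤ 2 * A * s ^ (-γ) / γ + (2 * cdf d s - 1) := hgap s hs0 hfar
    -- the sum is at least `(1 - ε) H s + ε (2 D s - 1) ≥ (1 - ε) (R + δ) - ε = R + δ / 2`
    nlinarith [mul_nonneg hε.le hT2, mul_le_mul_of_nonneg_left hRs (sub_nonneg.2 hε1)]

theorem fixed_threshold_components_converge_general (d : ℝ → ℝ) (γ Cd : ℝ) (h : IsMPT d γ Cd)
    (C : ℝ) (hC : 0 < C)
    (u v : ℕ → ℝ) (hu' : Tendsto u atTop atTop)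
    (hvu : Tendsto (fun m => v m * u m ^ (-(γ / 2))) atTop
      (nhds (C ^ ((γ + 1) / 2) * d (Real.sqrt C) / Cd)))
    (ω : ℕ → ℝ)
    (hABOS : Tendsto
      (fun m => v m * (2 * (1 - cdf d (ω m)))
        + (2 * cdf d (ω m * (1 + u m) ^ (-(1 : ℝ) / 2)) - 1)) atTop
      (nhds (2 * Real.sqrt C * d (Real.sqrt C) / γ + (2 * cdf d (Real.sqrt C) - 1)))) :
    Tendsto (fun m => v m * (2 * (1 - cdf d (ω m)))) atTop
      (nhds (2 * Real.sqrt C * d (Real.sqrt C) / γ)) ∧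
    Tendsto (fun m => 2 * cdf d (ω m * (1 + u m) ^ (-(1 : ℝ) / 2)) - 1) atTop
      (nhds (2 * cdf d (Real.sqrt C) - 1)) := by
  have hr : 0 < √C := sqrt_pos.2 hC
  have hA : C ^ ((γ + 1) / 2) * d √C = d √C * √C ^ (γ + 1) := by
    rw [sqrt_eq_rpow, ← rpow_mul hC.le, one_div_mul_eq_div, mul_comm]
  rw [hA] at hvu
  have hR := asymptoticRisk_self (d := d) (γ := γ) hr
  have hs := h.tendsto_rescaled_threshold hr (tendsto_atTop_add_const_left _ 1 hu')
    (tendsto_mul_one_add_rpow_neg hu' hvu) (by rwa [hR])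
  have hT2 : Tendsto (fun m => 2 * cdf d (ω m * (1 + u m) ^ (-(1 : ℝ) / 2)) - 1) atTop
      (𝓝 (2 * cdf d √C - 1)) :=
    ((((continuous_cdf h.integrable).tendsto √C).comp hs).const_mul 2).sub_const 1
  exact ⟨by simpa using hABOS.sub hT2, hT2⟩

/-- Under the asymptotic framework, if the Bayes risk per test of a sequence of fixed
thresholds converges to the optimal value `C₁ + C₂`, then each risk component converges to
its asymptotically optimal value individually. -/
theorem fixed_threshold_components_converge (d : ℝ → ℝ) (γ Cd : ℝ) (h : IsMPT d γ Cd)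
    (heven : ∀ x, d (-x) = d x) (hcont : ContinuousOn d (Set.Ioi 0))
    (C : ℝ) (hC : 0 < C)
    (u v : ℕ → ℝ) (hu : ∀ m, 0 < u m) (hu' : Tendsto u atTop atTop)
    (hv : ∀ m, 0 < v m)
    (hvu : Tendsto (fun m => v m * u m ^ (-(γ / 2))) atTop
      (nhds (C ^ ((γ + 1) / 2) * d (Real.sqrt C) / Cd)))
    (ω : ℕ → ℝ) (hω : ∀ m, 0 < ω m)
    (hABOS : Tendsto
      (fun m => v m * (2 * (1 - cdf d (ω m)))
        + (2 * cdf d (ω m * (1 + u m) ^ (-(1 : ℝ) / 2)) - 1)) atTop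
      (nhds (2 * Real.sqrt C * d (Real.sqrt C) / γ + (2 * cdf d (Real.sqrt C) - 1)))) :
    Tendsto (fun m => v m * (2 * (1 - cdf d (ω m)))) atTop
      (nhds (2 * Real.sqrt C * d (Real.sqrt C) / γ)) ∧
    Tendsto (fun m => 2 * cdf d (ω m * (1 + u m) ^ (-(1 : ℝ) / 2)) - 1) atTop
      (nhds (2 * cdf d (Real.sqrt C) - 1)) :=
  fixed_threshold_components_converge_general d γ Cd h C hC u v hu' hvu ω hABOS
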